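/- Let σ : [0,1] → S_μ be a C¹ curve and φ : [0,1] → E solve the parallel transport equation φ'(t) + (φ(t), σ'(t))·Gσ(t)/‖Gσ(t)‖² = 0 with (φ(0), σ(0)) = 0. Then (φ(t), σ(t)) = 0 and ⟨φ(t), φ(t)⟩ = ⟨φ(0), φ(0)⟩ for all t ∈ [0,1]; in particular, parallel transport T: T_{σ(0)}S_μ → T_{σ(1)}S_μ, φ(0) ↦ φ(1), is a linear isometry for the E-norm. -/

import Mathlib

/-! Differentiate `t ↦ (φ t, σ t)_H`: by the transport equation and `(Gσ, σ)_H = ‖Gσ‖²`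
the term `(φ', σ)_H` cancels `(φ, σ')_H` exactly, so `φ` stays `H`-orthogonal to `σ`.
Then `⟨φ', φ⟩` is a multiple of `⟨Gσ, φ⟩ = (σ, φ)_H = 0`, so `⟨φ, φ⟩` is constant too. -/

open scoped RealInnerProductSpace

open Set

theorem eq_of_hasDerivAt_zero_on_Icc {F : Type*} [NormedAddCommGroup F] [NormedSpace ℝ F]
    {f : ℝ → F} {a b : ℝ} (hf : ∀ t ∈ Icc a b, HasDerivAt f 0 t) :
    ∀ t ∈ Icc a b, f t = f a :=
  constant_of_has_deriv_right_zero
    (fun t ht => (hf t ht).continuousAt.continuousWithinAt)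
    (fun t ht => (hf t (Ico_subset_Icc_self ht)).hasDerivWithinAt)

section Transport

variable {E H : Type*} [NormedAddCommGroup E] [InnerProductSpace ℝ E]
  [NormedAddCommGroup H] [InnerProductSpace ℝ H] {ι : E →L[ℝ] H} {G : E →ₗ[ℝ] E}

theorem inner_map_gram_self (hG : ∀ u h : E, ⟪ι u, ι h⟫ = ⟪G u, h⟫) (u : E) :
    ⟪ι (G u), ι u⟫ = ‖G u‖ ^ 2 := by
  rw [real_inner_comm, hG, real_inner_self_eq_norm_sq]

theorem gram_apply_ne_zero (hG : ∀ u h : E, ⟪ι u, ι h⟫ = ⟪G u, h⟫) {u : E} (hu : ι u ≠ 0) :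
    G u ≠ 0 := by
  intro h
  apply hu
  rw [← inner_self_eq_zero (𝕜 := ℝ), hG, h, inner_zero_left]

variable {u v w p : E}

theorem inner_map_add_inner_map_eq_zero_of_transport
    (hG : ∀ u h : E, ⟪ι u, ι h⟫ = ⟪G u, h⟫) (hu : ι u ≠ 0)
    (hp : p + (⟪ι w, ι v⟫ / ‖G u‖ ^ 2) • G u = 0) :
    ⟪ι w, ι v⟫ + ⟪ι p, ι u⟫ = 0 := by
  have hGu : ‖G u‖ ^ 2 ≠ 0 := pow_ne_zero 2 (norm_ne_zero_iff.mpr (gram_apply_ne_zero hG hu))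
  rw [eq_neg_of_add_eq_zero_left hp, map_neg, map_smul, inner_neg_left, real_inner_smul_left,
    inner_map_gram_self hG, div_mul_cancel₀ _ hGu, add_neg_cancel]

theorem inner_add_inner_eq_zero_of_transport
    (hG : ∀ u h : E, ⟪ι u, ι h⟫ = ⟪G u, h⟫) (hwu : ⟪ι w, ι u⟫ = 0)
    (hp : p + (⟪ι w, ι v⟫ / ‖G u‖ ^ 2) • G u = 0) :
    ⟪w, p⟫ + ⟪p, w⟫ = 0 := by
  have hGw : ⟪G u, w⟫ = 0 := by rw [← hG, real_inner_comm, hwu]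
  rw [eq_neg_of_add_eq_zero_left hp, inner_neg_left, inner_neg_right, real_inner_smul_left,
    real_inner_smul_right, real_inner_comm (G u) w, hGw]
  ring

end Transport

theorem parallel_transport_isometry_general
    {E H : Type*} [NormedAddCommGroup E] [InnerProductSpace ℝ E]
    [NormedAddCommGroup H] [InnerProductSpace ℝ H]
    (ι : E →L[ℝ] H)
    (μ : ℝ) (hμ : 0 < μ)
    (G : E →ₗ[ℝ] E) (hG : ∀ u h : E, ⟪ι u, ι h⟫ = ⟪G u, h⟫)
    (σ σ' φ φ' : ℝ → E)
    (hS : ∀ t ∈ Set.Icc (0:ℝ) 1, ‖ι (σ t)‖ ^ 2 = μ)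
    (hdσ : ∀ t ∈ Set.Icc (0:ℝ) 1, HasDerivAt σ (σ' t) t)
    (hdφ : ∀ t ∈ Set.Icc (0:ℝ) 1, HasDerivAt φ (φ' t) t)
    (hode : ∀ t ∈ Set.Icc (0:ℝ) 1,
      φ' t + (⟪ι (φ t), ι (σ' t)⟫ / ‖G (σ t)‖ ^ 2) • G (σ t) = 0)
    (h0 : ⟪ι (φ 0), ι (σ 0)⟫ = 0) :
    ∀ t ∈ Set.Icc (0:ℝ) 1,
      ⟪ι (φ t), ι (σ t)⟫ = 0 ∧ ⟪φ t, φ t⟫ = ⟪φ 0, φ 0⟫ := by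
  have hισ : ∀ t ∈ Icc (0:ℝ) 1, ι (σ t) ≠ 0 := fun t ht h => by
    have hμ0 := hS t ht
    rw [h, norm_zero, zero_pow two_ne_zero] at hμ0
    exact hμ.ne hμ0
  have horth : ∀ t ∈ Icc (0:ℝ) 1, ⟪ι (φ t), ι (σ t)⟫ = 0 := by
    intro t ht
    rw [← h0]
    refine eq_of_hasDerivAt_zero_on_Icc (f := fun s => ⟪ι (φ s), ι (σ s)⟫) (fun s hs => ?_) t ht
    have hd : HasDerivAt (fun s => ⟪ι (φ s), ι (σ s)⟫)
        (⟪ι (φ s), ι (σ' s)⟫ + ⟪ι (φ' s), ι (σ s)⟫) s :=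
      (ι.hasFDerivAt.comp_hasDerivAt s (hdφ s hs)).inner ℝ
        (ι.hasFDerivAt.comp_hasDerivAt s (hdσ s hs))
    rwa [inner_map_add_inner_map_eq_zero_of_transport hG (hισ s hs) (hode s hs)] at hd
  have hnorm : ∀ t ∈ Icc (0:ℝ) 1, ⟪φ t, φ t⟫ = ⟪φ 0, φ 0⟫ := by
    refine eq_of_hasDerivAt_zero_on_Icc (f := fun s => ⟪φ s, φ s⟫) fun t ht => ?_
    have hd := (hdφ t ht).inner ℝ (hdφ t ht)
    rwa [inner_add_inner_eq_zero_of_transport hG (horth t ht) (hode t ht)] at hd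
  exact fun t ht => ⟨horth t ht, hnorm t ht⟩

/-- along a C¹ curve `σ : [0,1] → S_μ`, a solution `φ` of the parallel
transport equation `φ' + ((φ, σ')_H/‖Gσ‖²) Gσ = 0` with `(φ(0), σ(0))_H = 0` stays
`H`-orthogonal to `σ` and has constant `E`-inner square: `⟨φ(t), φ(t)⟩ = ⟨φ(0), φ(0)⟩`.
In particular, parallel transport `φ(0) ↦ φ(1)` is an isometry for the `E`-norm. -/
theorem parallel_transport_isometry
    {E H : Type*} [NormedAddCommGroup E] [InnerProductSpace ℝ E] [CompleteSpace E]
    [NormedAddCommGroup H] [InnerProductSpace ℝ H] [CompleteSpace H]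
    (ι : E →L[ℝ] H) (hι : Function.Injective ι) (hι1 : ‖(ι : E →L[ℝ] H)‖ ≤ 1)
    (μ : ℝ) (hμ : 0 < μ)
    (G : E →ₗ[ℝ] E) (hG : ∀ u h : E, ⟪ι u, ι h⟫ = ⟪G u, h⟫)
    (σ σ' φ φ' : ℝ → E)
    (hS : ∀ t ∈ Set.Icc (0:ℝ) 1, ‖ι (σ t)‖ ^ 2 = μ)
    (hdσ : ∀ t ∈ Set.Icc (0:ℝ) 1, HasDerivAt σ (σ' t) t)
    (hdφ : ∀ t ∈ Set.Icc (0:ℝ) 1, HasDerivAt φ (φ' t) t)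
    (hode : ∀ t ∈ Set.Icc (0:ℝ) 1,
      φ' t + (⟪ι (φ t), ι (σ' t)⟫ / ‖G (σ t)‖ ^ 2) • G (σ t) = 0)
    (h0 : ⟪ι (φ 0), ι (σ 0)⟫ = 0) :
    ∀ t ∈ Set.Icc (0:ℝ) 1,
      ⟪ι (φ t), ι (σ t)⟫ = 0 ∧ ⟪φ t, φ t⟫ = ⟪φ 0, φ 0⟫ :=
  parallel_transport_isometry_general ι μ hμ G hG σ σ' φ φ' hS hdσ hdφ hode h0
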